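/- arXiv:2010.10619 — 2 statements merged into one kernel-verified Lean document; each statement's English description precedes it below -/
import Mathlib

section
/- Consider a linear-polyhedral multistage problem: for each t ∈ {0,…,T−1} and w ∈ W_{t+1}, c_t^w(x,u) = max_{i∈I_{t,w}} ( ⟨c^{i,t,w}, (x,u)⟩ + d^{i,t,w} ) on a nonempty convex polyhedron P_{t,w} ⊆ ℝ^n × ℝ^m and +∞ outside, and f_t^w(x,u) = A_{t,w} x + B_{t,w} u; the final cost ψ(x) = max_{i∈I_T}( ⟨c^i_T, x⟩ + d^i_T ) for x in a nonempty convex polytope X_T and +∞ outside. Define value functions by V_T = ψ and V_t(x) = ∑_{w∈W_{t+1}} p_{t+1,w} · inf_{u∈ℝ^m} ( c_t^w(x,u) + V_{t+1}(f_t^w(x,u)) ). If for every t < T, every w ∈ W_{t+1} and every x ∈ ℝ^n one has inf_{u∈ℝ^m}( c_t^w(x,u) + V_{t+1}(f_t^w(x,u)) ) > −∞, and each V_t is finite at some point, then V_t is a polyhedral function for every t ∈ {0,…,T}. -/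
/-!
Backward induction on `t`. Polyhedrality of the epigraph `{(x, r) | g x ≤ r}` is preserved by
precomposition with a linear map and by multiplication with a positive constant (both are
preimages under linear maps), and by sums and partial infima: the epigraph of `f + g` and of
`x ↦ ⨅ u, G (x, u)` are linear projections of polyhedra, and projections of polyhedra are
polyhedra by Fourier–Motzkin elimination. For the partial infimum the projection
`{(x, r) | ∃ u, G (x, u) ≤ r}` a priori only contains the strict epigraph of the infimum;
closedness of polyhedra supplies the rest.
The properness hypotheses keep every value function away from `⊥`, which is what makes
`EReal` addition behave, and finiteness of `V t` somewhere makes its epigraph nonempty.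
-/

open scoped RealInnerProductSpace

/-- A convex polyhedron: an intersection of finitely many closed halfspaces
(each halfspace being the sublevel set of a linear functional). -/
def IsPolyhedron {E : Type*} [AddCommGroup E] [Module ℝ E] (S : Set E) : Prop :=
  ∃ (k : ℕ) (φ : Fin k → E →ₗ[ℝ] ℝ) (b : Fin k → ℝ),
    S = ⋂ i, {z | φ i z ≤ b i}

/-- A polyhedral function `g : E → ℝ ∪ {+∞}`: its epigraph
`{(z, r) : g z ≤ r}` is a nonempty convex polyhedron in `E × ℝ`. -/
def IsPolyhedralFn {E : Type*} [AddCommGroup E] [Module ℝ E] (g : E → EReal) : Prop :=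
  {q : E × ℝ | g q.1 ≤ (q.2 : EReal)}.Nonempty ∧
  IsPolyhedron {q : E × ℝ | g q.1 ≤ (q.2 : EReal)}

lemma EReal.add_le_coe_iff {a b : EReal} (ha : a ≠ ⊥) (hb : b ≠ ⊥) {r : ℝ} :
    a + b ≤ r ↔ ∃ s t : ℝ, a ≤ s ∧ b ≤ t ∧ s + t ≤ r := by
  refine ⟨fun h => ?_, fun ⟨s, t, hs, ht, hst⟩ => ?_⟩
  · induction a using EReal.rec with
    | bot => exact absurd rfl ha
    | top => simp [EReal.top_add_of_ne_bot hb] at h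
    | coe s =>
      induction b using EReal.rec with
      | bot => exact absurd rfl hb
      | top => simp at h
      | coe t => exact ⟨s, t, le_rfl, le_rfl, mod_cast h⟩
  · exact (add_le_add hs ht).trans (mod_cast hst)

lemma EReal.coe_mul_le_coe_iff {p : ℝ} (hp : 0 < p) (a : EReal) (r : ℝ) :
    p * a ≤ r ↔ a ≤ (p⁻¹ * r : ℝ) := by
  rw [mul_comm, ← EReal.le_div_iff_mul_le (mod_cast hp) (EReal.coe_ne_top p), ← EReal.coe_div,
    div_eq_inv_mul]

lemma EReal.coe_mul_ne_bot {p : ℝ} (hp : 0 < p) {a : EReal} (ha : a ≠ ⊥) : p * a ≠ ⊥ :=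
  (EReal.mul_ne_bot _ _).2 ⟨.inl (EReal.coe_ne_bot p), .inr ha, .inl (EReal.coe_ne_top p),
    .inl (mod_cast hp.le)⟩

lemma EReal.sum_ne_bot {ι : Type*} {s : Finset ι} {f : ι → EReal} (h : ∀ i ∈ s, f i ≠ ⊥) :
    ∑ i ∈ s, f i ≠ ⊥ :=
  Finset.sum_induction f (· ≠ ⊥) (fun _ _ ha hb => EReal.add_ne_bot_iff.2 ⟨ha, hb⟩)
    (EReal.zero_ne_bot) h

lemma Finset.exists_between_of_forall_le {α : Type*} [LinearOrder α] [Nonempty α]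
    {s t : Finset α} (h : ∀ a ∈ s, ∀ b ∈ t, a ≤ b) :
    ∃ c, (∀ a ∈ s, a ≤ c) ∧ ∀ b ∈ t, c ≤ b := by
  rcases s.eq_empty_or_nonempty with rfl | hs
  · rcases t.eq_empty_or_nonempty with rfl | ht
    · exact ⟨Classical.arbitrary α, by simp⟩
    · exact ⟨t.min' ht, by simp, t.min'_le⟩
  · exact ⟨s.max' hs, s.le_max', h _ (s.max'_mem hs)⟩

lemma exists_forall_mul_le_iff {ι : Type*} [Fintype ι] (a c : ι → ℝ) :
    (∃ r, ∀ i, a i * r ≤ c i) ↔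
      (∀ i, a i = 0 → 0 ≤ c i) ∧ ∀ i j, a i < 0 → 0 < a j → 0 ≤ a j * c i - a i * c j := by
  constructor
  · rintro ⟨r, h⟩
    refine ⟨fun i hi => by simpa [hi] using h i, fun i j hi hj => ?_⟩
    nlinarith [mul_le_mul_of_nonneg_left (h i) hj.le,
      mul_le_mul_of_nonneg_left (h j) (neg_nonneg.2 hi.le)]
  · rintro ⟨hzero, hpair⟩
    obtain ⟨r, hlow, hup⟩ := Finset.exists_between_of_forall_le
      (s := (Finset.univ.filter (a · < 0)).image fun i => c i / a i)
      (t := (Finset.univ.filter (0 < a ·)).image fun j => c j / a j) (by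
        simp only [Finset.mem_image, Finset.mem_filter, Finset.mem_univ, true_and]
        rintro _ ⟨i, hi, rfl⟩ _ ⟨j, hj, rfl⟩
        rw [← neg_div_neg_eq, div_le_div_iff₀ (neg_pos.2 hi) hj]
        nlinarith [hpair i j hi hj])
    simp only [Finset.mem_image, Finset.mem_filter, Finset.mem_univ, true_and,
      forall_exists_index, and_imp, forall_apply_eq_imp_iff₂] at hlow hup
    refine ⟨r, fun i => ?_⟩
    rcases lt_trichotomy (a i) 0 with hi | hi | hi
    · simpa [mul_comm] using (div_le_iff_of_neg hi).1 (hlow i hi)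
    · simpa [hi] using hzero i hi
    · simpa [mul_comm] using (le_div_iff₀ hi).1 (hup i hi)

section Polyhedron

variable {E F : Type*} [AddCommGroup E] [Module ℝ E] [AddCommGroup F] [Module ℝ F]

lemma LinearMap.apply_mk_eq_add_mul (φ : E × ℝ →ₗ[ℝ] ℝ) (x : E) (r : ℝ) :
    φ (x, r) = φ.comp (LinearMap.inl ℝ E ℝ) x + r * φ.comp (LinearMap.inr ℝ E ℝ) 1 := by
  rw [show (x, r) = LinearMap.inl ℝ E ℝ x + r • LinearMap.inr ℝ E ℝ 1 by simp, map_add,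
    map_smul, smul_eq_mul]
  rfl

lemma isPolyhedron_iInter_setOf_le {ι : Type*} [Finite ι] (φ : ι → E →ₗ[ℝ] ℝ) (b : ι → ℝ) :
    IsPolyhedron (⋂ i, {z | φ i z ≤ b i}) := by
  obtain ⟨k, ⟨e⟩⟩ := Finite.exists_equiv_fin ι
  exact ⟨k, φ ∘ e.symm, b ∘ e.symm, (e.symm.surjective.iInter_comp _).symm⟩

lemma isPolyhedron_setOf_le (φ : E →ₗ[ℝ] ℝ) (b : ℝ) : IsPolyhedron {z | φ z ≤ b} := by
  simpa only [Set.iInter_const] using isPolyhedron_iInter_setOf_le (fun _ : Unit => φ) fun _ => b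

lemma isPolyhedron_iInter {ι : Type*} [Finite ι] {S : ι → Set E}
    (hS : ∀ i, IsPolyhedron (S i)) : IsPolyhedron (⋂ i, S i) := by
  choose k φ b hS using hS
  convert isPolyhedron_iInter_setOf_le (fun ij : Σ i, Fin (k i) => φ ij.1 ij.2)
    (fun ij => b ij.1 ij.2)
  ext z
  simp [hS, Sigma.forall]

lemma IsPolyhedron.inter {S T : Set E} (hS : IsPolyhedron S) (hT : IsPolyhedron T) :
    IsPolyhedron (S ∩ T) :=
  Set.inter_eq_iInter ▸ isPolyhedron_iInter (Bool.forall_bool.2 ⟨hT, hS⟩)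

lemma IsPolyhedron.preimage {S : Set F} (hS : IsPolyhedron S) (L : E →ₗ[ℝ] F) :
    IsPolyhedron (L ⁻¹' S) := by
  obtain ⟨k, φ, b, rfl⟩ := hS
  exact ⟨k, fun i => (φ i).comp L, b, by ext; simp⟩

lemma IsPolyhedron.isClosed_preimage_mk {S : Set (E × ℝ)} (hS : IsPolyhedron S) (x : E) :
    IsClosed (Prod.mk x ⁻¹' S) := by
  obtain ⟨k, φ, b, rfl⟩ := hS
  simp only [Set.preimage_iInter, Set.preimage_ofPred_eq, LinearMap.apply_mk_eq_add_mul _ x]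
  exact isClosed_iInter fun i => isClosed_le (by fun_prop) continuous_const

lemma IsPolyhedron.image_fst_real {S : Set (E × ℝ)} (hS : IsPolyhedron S) :
    IsPolyhedron (Prod.fst '' S) := by
  obtain ⟨k, φ, b, rfl⟩ := hS
  set ψ : Fin k → E →ₗ[ℝ] ℝ := fun i => (φ i).comp (LinearMap.inl ℝ E ℝ)
  set a : Fin k → ℝ := fun i => (φ i).comp (LinearMap.inr ℝ E ℝ) 1
  convert (isPolyhedron_iInter fun i : {i // a i = 0} => isPolyhedron_setOf_le (ψ i) (b i)).inter
    (isPolyhedron_iInter fun ij : {ij : Fin k × Fin k // a ij.1 < 0 ∧ 0 < a ij.2} =>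
      isPolyhedron_setOf_le (a ij.1.2 • ψ ij.1.1 - a ij.1.1 • ψ ij.1.2)
        (a ij.1.2 * b ij.1.1 - a ij.1.1 * b ij.1.2))
  ext x
  have hfiber : x ∈ Prod.fst '' ⋂ i, {z | φ i z ≤ b i} ↔ ∃ r, ∀ i, a i * r ≤ b i - ψ i x := by
    simp only [Set.mem_image, Set.mem_iInter, Set.mem_ofPred_eq, Prod.exists, exists_and_right,
      exists_eq_right, LinearMap.apply_mk_eq_add_mul _ x]
    exact exists_congr fun r => forall_congr' fun i => by rw [le_sub_iff_add_le', mul_comm]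
  rw [hfiber, exists_forall_mul_le_iff]
  simp only [Set.mem_inter_iff, Set.mem_iInter, Set.mem_ofPred_eq, Subtype.forall, Prod.forall,
    LinearMap.sub_apply, LinearMap.smul_apply, smul_eq_mul, sub_nonneg]
  refine and_congr Iff.rfl (forall₂_congr fun i j => ⟨fun h hij => ?_, fun h hi hj => ?_⟩)
  · linarith [h hij.1 hij.2]
  · linarith [h ⟨hi, hj⟩]

lemma IsPolyhedron.image_fst_pi {k : ℕ} {S : Set (E × (Fin k → ℝ))} (hS : IsPolyhedron S) :
    IsPolyhedron (Prod.fst '' S) := by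
  induction k with
  | zero =>
    convert hS.preimage (LinearMap.inl ℝ E (Fin 0 → ℝ))
    ext x
    simp only [Set.mem_image, Set.mem_preimage, Prod.exists, exists_and_right, exists_eq_right,
      LinearMap.inl_apply]
    exact ⟨fun ⟨f, hf⟩ => Subsingleton.elim f 0 ▸ hf, fun h => ⟨0, h⟩⟩
  | succ k ih =>
    set M : (E × (Fin k → ℝ)) × ℝ →ₗ[ℝ] E × (Fin (k + 1) → ℝ) :=
      LinearMap.fst ℝ E _ ∘ₗ LinearMap.fst ℝ _ ℝ |>.prod
        ((Fin.consLinearEquiv ℝ fun _ => ℝ).toLinearMap ∘ₗ (LinearMap.snd ℝ _ ℝ).prod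
          (LinearMap.snd ℝ E _ ∘ₗ LinearMap.fst ℝ _ ℝ))
    convert ih (hS.preimage M).image_fst_real
    ext x
    simp only [Set.mem_image, Set.mem_preimage, Prod.exists, exists_and_right, exists_eq_right]
    constructor
    · rintro ⟨f, hf⟩
      set e := Fin.consLinearEquiv ℝ fun _ : Fin (k + 1) => ℝ
      refine ⟨(e.symm f).2, (e.symm f).1, ?_⟩
      convert hf
      exacts [rfl, e.apply_symm_apply f]
    · rintro ⟨v, r, h⟩
      exact ⟨_, h⟩

lemma IsPolyhedron.image_fst [FiniteDimensional ℝ F] {S : Set (E × F)} (hS : IsPolyhedron S) :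
    IsPolyhedron (Prod.fst '' S) := by
  let e := (LinearEquiv.refl ℝ E).prodCongr (Module.finBasis ℝ F).equivFun.symm
  convert (hS.preimage e.toLinearMap).image_fst_pi
  ext x
  simp only [Set.mem_image, Set.mem_preimage, Prod.exists, exists_and_right, exists_eq_right]
  constructor
  · rintro ⟨y, hy⟩
    exact ⟨(Module.finBasis ℝ F).equivFun y, by simpa [e] using hy⟩
  · rintro ⟨v, hv⟩
    exact ⟨_, hv⟩

end Polyhedron

def epigraph {E : Type*} (g : E → EReal) : Set (E × ℝ) := {q | g q.1 ≤ q.2}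

@[simp]
lemma mem_epigraph {E : Type*} {g : E → EReal} {x : E} {r : ℝ} :
    (x, r) ∈ epigraph g ↔ g x ≤ r := Iff.rfl

section Epigraph

variable {E F : Type*} [AddCommGroup E] [Module ℝ E] [AddCommGroup F] [Module ℝ F]

lemma isPolyhedralFn_of_isPolyhedron_epigraph {g : E → EReal} {x : E} (htop : g x ≠ ⊤)
    (hbot : g x ≠ ⊥) (hg : IsPolyhedron (epigraph g)) : IsPolyhedralFn g :=
  ⟨⟨(x, (g x).toReal), by simp [EReal.coe_toReal htop hbot]⟩, hg⟩

section MaxAffine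

variable {ι : Type*} [Fintype ι] [Nonempty ι] {S : Set E} {ℓ : ι → E →ₗ[ℝ] ℝ} {d : ι → ℝ}
  {g : E → EReal}

lemma ne_bot_of_maxAffineOn
    (hin : ∀ x ∈ S, g x = (Finset.univ.sup' Finset.univ_nonempty fun i => ℓ i x + d i : ℝ))
    (hout : ∀ x ∉ S, g x = ⊤) (x : E) : g x ≠ ⊥ := by
  by_cases hx : x ∈ S
  · simp [hin x hx]
  · simp [hout x hx]

lemma isPolyhedron_epigraph_of_maxAffineOn (hS : IsPolyhedron S)
    (hin : ∀ x ∈ S, g x = (Finset.univ.sup' Finset.univ_nonempty fun i => ℓ i x + d i : ℝ))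
    (hout : ∀ x ∉ S, g x = ⊤) : IsPolyhedron (epigraph g) := by
  convert (hS.preimage (LinearMap.fst ℝ E ℝ)).inter
    (isPolyhedron_iInter fun i => isPolyhedron_setOf_le ((ℓ i).coprod (-LinearMap.id)) (-d i))
  ext ⟨x, r⟩
  by_cases hx : x ∈ S
  · simp [hin x hx, hx, Finset.sup'_le_iff, add_comm]
  · simp [hout x hx, hx]

end MaxAffine

lemma IsPolyhedron.epigraph_comp {g : F → EReal} (hg : IsPolyhedron (epigraph g))
    (L : E →ₗ[ℝ] F) : IsPolyhedron (epigraph (g ∘ L)) :=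
  hg.preimage (L.prodMap LinearMap.id)

lemma IsPolyhedron.epigraph_add {f g : E → EReal} (hf : IsPolyhedron (epigraph f))
    (hg : IsPolyhedron (epigraph g)) (hf_bot : ∀ x, f x ≠ ⊥) (hg_bot : ∀ x, g x ≠ ⊥) :
    IsPolyhedron (epigraph (f + g)) := by
  convert (((hf.preimage ((LinearMap.fst ℝ E ℝ).prodMap (LinearMap.fst ℝ ℝ ℝ))).inter
    (hg.preimage ((LinearMap.fst ℝ E ℝ).prodMap (LinearMap.snd ℝ ℝ ℝ)))).inter
    (isPolyhedron_setOf_le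
      ((-LinearMap.snd ℝ E ℝ).coprod (LinearMap.fst ℝ ℝ ℝ + LinearMap.snd ℝ ℝ ℝ)) 0)).image_fst
  ext ⟨x, r⟩
  simp [EReal.add_le_coe_iff (hf_bot x) (hg_bot x), and_assoc]

lemma IsPolyhedron.epigraph_const_mul {f : E → EReal} (hf : IsPolyhedron (epigraph f)) {p : ℝ}
    (hp : 0 < p) : IsPolyhedron (epigraph fun x => (p : EReal) * f x) := by
  convert hf.preimage (LinearMap.id.prodMap (p⁻¹ • LinearMap.id) : E × ℝ →ₗ[ℝ] E × ℝ)
  ext ⟨x, r⟩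
  simp [EReal.coe_mul_le_coe_iff hp]

lemma isPolyhedron_epigraph_sum {ι : Type*} (s : Finset ι) {f : ι → E → EReal}
    (hf_bot : ∀ i ∈ s, ∀ x, f i x ≠ ⊥) (hf : ∀ i ∈ s, IsPolyhedron (epigraph (f i))) :
    IsPolyhedron (epigraph fun x => ∑ i ∈ s, f i x) := by
  classical
  induction s using Finset.induction_on with
  | empty => simpa [epigraph] using isPolyhedron_setOf_le (-LinearMap.snd ℝ E ℝ) 0
  | insert i s hi ih =>
    simp only [Finset.sum_insert hi]
    exact (hf i (s.mem_insert_self i)).epigraph_add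
      (ih (fun j hj => hf_bot j (Finset.mem_insert_of_mem hj))
        fun j hj => hf j (Finset.mem_insert_of_mem hj))
      (hf_bot i (s.mem_insert_self i))
      fun x => EReal.sum_ne_bot fun j hj => hf_bot j (Finset.mem_insert_of_mem hj) x

lemma IsPolyhedron.epigraph_iInf [FiniteDimensional ℝ F] {G : E × F → EReal}
    (hG : IsPolyhedron (epigraph G)) : IsPolyhedron (epigraph fun x => ⨅ u, G (x, u)) := by
  let M : (E × ℝ) × F →ₗ[ℝ] (E × F) × ℝ :=
    ((LinearMap.fst ℝ E ℝ).prodMap LinearMap.id).prod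
      (LinearMap.snd ℝ E ℝ ∘ₗ LinearMap.fst ℝ _ F)
  have hproj := (hG.preimage M).image_fst
  have hmem : ∀ x (s : ℝ), (x, s) ∈ Prod.fst '' (M ⁻¹' epigraph G) ↔ ∃ u, G (x, u) ≤ s := by
    intro x s
    simp [M]
  convert hproj using 1
  ext ⟨x, r⟩
  refine ⟨fun h => ?_, fun h => ?_⟩
  · have hIoi : Set.Ioi r ⊆ Prod.mk x ⁻¹' (Prod.fst '' (M ⁻¹' epigraph G)) := fun s hs => by
      obtain ⟨u, hu⟩ := iInf_lt_iff.1 (h.trans_lt (EReal.coe_lt_coe_iff.2 hs))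
      exact (hmem x s).2 ⟨u, hu.le⟩
    exact (hproj.isClosed_preimage_mk x).closure_subset_iff.2 hIoi
      (by rw [closure_Ioi]; exact Set.self_mem_Ici)
  · obtain ⟨u, hu⟩ := (hmem x r).1 h
    exact (iInf_le (fun u => G (x, u)) u).trans hu

end Epigraph

theorem statement10_general {n m : ℕ} (T : ℕ)
    (W : ℕ → Type) [∀ t, Fintype (W t)]
    (p : ∀ t, W t → ℝ) (hp : ∀ t, ∀ w, 0 < p t w)
    (I : ∀ t, W t → Type) [∀ t w, Fintype (I t w)] [∀ t w, Nonempty (I t w)]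
    (a : ∀ t, ∀ w : W t, I t w →
      EuclideanSpace ℝ (Fin n) × EuclideanSpace ℝ (Fin m))
    (d : ∀ t, ∀ w : W t, I t w → ℝ)
    (P : ∀ t, W t → Set (EuclideanSpace ℝ (Fin n) × EuclideanSpace ℝ (Fin m)))
    (hPpoly : ∀ t < T, ∀ w : W t, IsPolyhedron (P t w))
    -- the polyhedral costs
    (c : ∀ t, W t → EuclideanSpace ℝ (Fin n) × EuclideanSpace ℝ (Fin m) → EReal)
    (hcin : ∀ t < T, ∀ w : W t, ∀ q ∈ P t w, c t w q =
      ((Finset.univ.sup' Finset.univ_nonempty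
        (fun i : I t w => ⟪(a t w i).1, q.1⟫ + ⟪(a t w i).2, q.2⟫ + d t w i) : ℝ) : EReal))
    (hcout : ∀ t < T, ∀ w : W t, ∀ q ∉ P t w, c t w q = (⊤ : EReal))
    -- the linear dynamics
    (A : ∀ t, W t → (EuclideanSpace ℝ (Fin n) →ₗ[ℝ] EuclideanSpace ℝ (Fin n)))
    (B : ∀ t, W t → (EuclideanSpace ℝ (Fin m) →ₗ[ℝ] EuclideanSpace ℝ (Fin n)))
    -- the final cost, polyhedral on the nonempty convex polytope X T
    (IT : Type) [Fintype IT] [Nonempty IT]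
    (cT : IT → EuclideanSpace ℝ (Fin n)) (dT : IT → ℝ)
    (XT : Set (EuclideanSpace ℝ (Fin n)))
    (hXTpoly : IsPolyhedron XT)
    (ψ : EuclideanSpace ℝ (Fin n) → EReal)
    (hψin : ∀ x ∈ XT, ψ x =
      ((Finset.univ.sup' Finset.univ_nonempty
        (fun i : IT => ⟪cT i, x⟫ + dT i) : ℝ) : EReal))
    (hψout : ∀ x ∉ XT, ψ x = (⊤ : EReal))
    -- the value functions, by backward recursion
    (V : ℕ → EuclideanSpace ℝ (Fin n) → EReal)
    (hVT : ∀ x, V T x = ψ x)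
    (hVrec : ∀ t < T, ∀ x, V t x = ∑ w, (p t w : EReal) *
      (⨅ u, (c t w (x, u) + V (t + 1) (A t w x + B t w u))))
    -- properness conditions
    (hbdd : ∀ t < T, ∀ w : W t, ∀ x,
      (⨅ u, (c t w (x, u) + V (t + 1) (A t w x + B t w u))) ≠ (⊥ : EReal))
    (hfin : ∀ t ≤ T, ∃ x₀, V t x₀ ≠ (⊤ : EReal)) :
    ∀ t ≤ T, IsPolyhedralFn (V t) := by
  let ℓ t w i := (innerₛₗ ℝ (a t w i).1).coprod (innerₛₗ ℝ (a t w i).2)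
  let ℓT i := innerₛₗ ℝ (cT i)
  have hc_bot : ∀ t < T, ∀ w, ∀ q, c t w q ≠ ⊥ := fun t ht w =>
    ne_bot_of_maxAffineOn (ℓ := ℓ t w) (hcin t ht w) (hcout t ht w)
  have hV_bot : ∀ t ≤ T, ∀ x, V t x ≠ ⊥ := by
    intro t ht x
    rcases ht.lt_or_eq with ht | rfl
    · rw [hVrec t ht x]
      exact EReal.sum_ne_bot fun w _ => EReal.coe_mul_ne_bot (hp t w) (hbdd t ht w x)
    · rw [hVT]
      exact ne_bot_of_maxAffineOn (ℓ := ℓT) hψin hψout x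
  have hV_epi : ∀ t ≤ T, IsPolyhedron (epigraph (V t)) := by
    intro t ht
    induction ht using Nat.decreasingInduction with
    | self =>
      rw [funext hVT]
      exact isPolyhedron_epigraph_of_maxAffineOn (ℓ := ℓT) hXTpoly hψin hψout
    | of_succ t ht ih =>
      have hstage : ∀ w, IsPolyhedron
          (epigraph fun x => ⨅ u, c t w (x, u) + V (t + 1) (A t w x + B t w u)) := fun w =>
        IsPolyhedron.epigraph_iInf (G := c t w + V (t + 1) ∘ (A t w).coprod (B t w))
          ((isPolyhedron_epigraph_of_maxAffineOn (ℓ := ℓ t w) (hPpoly t ht w) (hcin t ht w)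
            (hcout t ht w)).epigraph_add (ih.epigraph_comp _) (hc_bot t ht w)
            fun _ => hV_bot (t + 1) ht _)
      rw [funext (hVrec t ht)]
      exact isPolyhedron_epigraph_sum _
        (fun w _ x => EReal.coe_mul_ne_bot (hp t w) (hbdd t ht w x))
        fun w _ => (hstage w).epigraph_const_mul (hp t w)
  intro t ht
  obtain ⟨x₀, hx₀⟩ := hfin t ht
  exact isPolyhedralFn_of_isPolyhedron_epigraph hx₀ (hV_bot t ht x₀) (hV_epi t ht)

/-- In a linear-polyhedral multistage problem (polyhedral
costs `c_t^w`, linear dynamics, polyhedral final cost `ψ` on a nonempty convex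
polytope `X T`), every value function `V t` of the backward Bellman recursion
is polyhedral — provided each inner infimum is `> −∞` and each `V t` is finite
at some point.  Here, for stage `t < T`, `W t` plays the role of the noise set
`W_{t+1}` of the paper and `p t w` the probability weight `p_{t+1,w}`. -/
theorem statement10 {n m : ℕ} (hn : 0 < n) (hm : 0 < m) (T : ℕ) (hT : 1 ≤ T)
    (W : ℕ → Type) [∀ t, Fintype (W t)] [∀ t, Nonempty (W t)]
    (p : ∀ t, W t → ℝ) (hp : ∀ t, ∀ w, 0 < p t w) (hpsum : ∀ t, ∑ w, p t w = 1)
    (I : ∀ t, W t → Type) [∀ t w, Fintype (I t w)] [∀ t w, Nonempty (I t w)]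
    (a : ∀ t, ∀ w : W t, I t w →
      EuclideanSpace ℝ (Fin n) × EuclideanSpace ℝ (Fin m))
    (d : ∀ t, ∀ w : W t, I t w → ℝ)
    (P : ∀ t, W t → Set (EuclideanSpace ℝ (Fin n) × EuclideanSpace ℝ (Fin m)))
    (hPne : ∀ t < T, ∀ w : W t, (P t w).Nonempty)
    (hPpoly : ∀ t < T, ∀ w : W t, IsPolyhedron (P t w))
    -- the polyhedral costs
    (c : ∀ t, W t → EuclideanSpace ℝ (Fin n) × EuclideanSpace ℝ (Fin m) → EReal)
    (hcin : ∀ t < T, ∀ w : W t, ∀ q ∈ P t w, c t w q =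
      ((Finset.univ.sup' Finset.univ_nonempty
        (fun i : I t w => ⟪(a t w i).1, q.1⟫ + ⟪(a t w i).2, q.2⟫ + d t w i) : ℝ) : EReal))
    (hcout : ∀ t < T, ∀ w : W t, ∀ q ∉ P t w, c t w q = (⊤ : EReal))
    -- the linear dynamics
    (A : ∀ t, W t → (EuclideanSpace ℝ (Fin n) →ₗ[ℝ] EuclideanSpace ℝ (Fin n)))
    (B : ∀ t, W t → (EuclideanSpace ℝ (Fin m) →ₗ[ℝ] EuclideanSpace ℝ (Fin n)))
    -- the final cost, polyhedral on the nonempty convex polytope X T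
    (IT : Type) [Fintype IT] [Nonempty IT]
    (cT : IT → EuclideanSpace ℝ (Fin n)) (dT : IT → ℝ)
    (XT : Set (EuclideanSpace ℝ (Fin n)))
    (hXTne : XT.Nonempty) (hXTpoly : IsPolyhedron XT) (hXTcp : IsCompact XT)
    (ψ : EuclideanSpace ℝ (Fin n) → EReal)
    (hψin : ∀ x ∈ XT, ψ x =
      ((Finset.univ.sup' Finset.univ_nonempty
        (fun i : IT => ⟪cT i, x⟫ + dT i) : ℝ) : EReal))
    (hψout : ∀ x ∉ XT, ψ x = (⊤ : EReal))
    -- the value functions, by backward recursion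
    (V : ℕ → EuclideanSpace ℝ (Fin n) → EReal)
    (hVT : ∀ x, V T x = ψ x)
    (hVrec : ∀ t < T, ∀ x, V t x = ∑ w, (p t w : EReal) *
      (⨅ u, (c t w (x, u) + V (t + 1) (A t w x + B t w u))))
    -- properness conditions
    (hbdd : ∀ t < T, ∀ w : W t, ∀ x,
      (⨅ u, (c t w (x, u) + V (t + 1) (A t w x + B t w u))) ≠ (⊥ : EReal))
    (hfin : ∀ t ≤ T, ∃ x₀, V t x₀ ≠ (⊤ : EReal)) :
    ∀ t ≤ T, IsPolyhedralFn (V t) :=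
  statement10_general T W p hp I a d P hPpoly c hcin hcout A B IT cT dT XT hXTpoly ψ hψin hψout V
    hVT hVrec hbdd hfin
end

section
/- Define Ṽ_t : ℝ^𝕏 → ℝ by Ṽ_T(c) = ⟨c, K⟩ and Ṽ_t(c) = min_{u∈𝕌} ( ⟨c, L_t^u⟩ + ∑_{o∈𝕆} Ṽ_{t+1}(cM_t^{u,o}) ) for t < T. Suppose each M_t^{u,o} has nonnegative entries with ∑_{o∈𝕆} ∑_{x'∈𝕏} M_t^{u,o}(x,x') = 1 for every x ∈ 𝕏, that max_{x∈𝕏}|L_t^u(x)| ≤ ℒ for all t and u, and that max_{x∈𝕏}|K(x)| ≤ 𝒦. Then for every t ∈ {0,…,T}, Ṽ_t is (ℒ(T − t) + 𝒦)-Lipschitz with respect to the ℓ1 norm on the nonnegative orthant ℝ₊^𝕏. -/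
/-!
A nonnegative kernel whose rows sum to at most one does not increase `ℓ1` distances:
`‖cM - c'M‖₁ ≤ ‖c - c'‖₁`. Each Bellman step therefore adds at most `ℒ` (from the
running cost) to the `ℓ1` Lipschitz constant of the cost-to-go, since a minimum over
finitely many actions of functions that are pointwise `ε`-close is again `ε`-close.
Backward induction from `‖K‖_∞ ≤ 𝒦` gives the constant `ℒ(T - t) + 𝒦`.
-/

open Finset

def L1LipschitzOnOrthant {ι : Type*} [Fintype ι] (C : ℝ) (f : (ι → ℝ) → ℝ) : Prop :=
  ∀ c c' : ι → ℝ, (∀ i, 0 ≤ c i) → (∀ i, 0 ≤ c' i) → |f c - f c'| ≤ C * ∑ i, |c i - c' i|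

lemma abs_sum_mul_sub_sum_mul_le {ι : Type*} [Fintype ι] {w : ι → ℝ} {B : ℝ}
    (hw : ∀ i, |w i| ≤ B) (c c' : ι → ℝ) :
    |∑ i, c i * w i - ∑ i, c' i * w i| ≤ B * ∑ i, |c i - c' i| := by
  rw [← sum_sub_distrib, mul_sum]
  refine (abs_sum_le_sum_abs _ _).trans (sum_le_sum fun i _ => ?_)
  rw [← sub_mul, abs_mul, mul_comm]
  exact mul_le_mul_of_nonneg_right (hw i) (abs_nonneg _)

lemma sum_sum_abs_sub_le_of_substochastic {ι κ ι' : Type*} [Fintype ι] [Fintype κ]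
    [Fintype ι'] {M : κ → ι → ι' → ℝ} (hM : ∀ o x x', 0 ≤ M o x x')
    (hrow : ∀ x, ∑ o, ∑ x', M o x x' ≤ 1) (c c' : ι → ℝ) :
    ∑ o, ∑ x', |∑ x, c x * M o x x' - ∑ x, c' x * M o x x'| ≤ ∑ x, |c x - c' x| := by
  have hentry : ∀ o x', |∑ x, c x * M o x x' - ∑ x, c' x * M o x x'| ≤
      ∑ x, |c x - c' x| * M o x x' := fun o x' => by
    rw [← sum_sub_distrib]
    refine (abs_sum_le_sum_abs _ _).trans_eq (sum_congr rfl fun x _ => ?_)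
    rw [← sub_mul, abs_mul, abs_of_nonneg (hM o x x')]
  calc ∑ o, ∑ x', |∑ x, c x * M o x x' - ∑ x, c' x * M o x x'|
      ≤ ∑ o, ∑ x', ∑ x, |c x - c' x| * M o x x' :=
        sum_le_sum fun o _ => sum_le_sum fun x' _ => hentry o x'
    _ = ∑ x, |c x - c' x| * ∑ o, ∑ x', M o x x' := by
        simp only [mul_sum]
        exact (sum_congr rfl fun _ _ => sum_comm).trans sum_comm
    _ ≤ ∑ x, |c x - c' x| := sum_le_sum fun x _ =>
        mul_le_of_le_one_right (abs_nonneg _) (hrow x)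

lemma abs_ciInf_sub_ciInf_le {ι : Type*} [Finite ι] [Nonempty ι] {f g : ι → ℝ} {ε : ℝ}
    (h : ∀ i, |f i - g i| ≤ ε) : |(⨅ i, f i) - ⨅ i, g i| ≤ ε := by
  have key : ∀ f g : ι → ℝ, (∀ i, |f i - g i| ≤ ε) → (⨅ i, f i) - ε ≤ ⨅ i, g i :=
    fun f g h => le_ciInf fun i => by
      have := ciInf_le (Set.finite_range f).bddBelow i
      linarith [(abs_le.mp (h i)).2]
  rw [abs_sub_le_iff]
  constructor
  · linarith [key f g h]
  · linarith [key g f fun i => by rw [abs_sub_comm]; exact h i]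

lemma L1LipschitzOnOrthant.bellman_step {𝕏 𝕌 𝕆 : Type*} [Fintype 𝕏] [Fintype 𝕌]
    [Nonempty 𝕌] [Fintype 𝕆] {M : 𝕌 → 𝕆 → 𝕏 → 𝕏 → ℝ} (hMnn : ∀ u o x x', 0 ≤ M u o x x')
    (hMsub : ∀ u x, ∑ o, ∑ x', M u o x x' ≤ 1) {L : 𝕌 → 𝕏 → ℝ} {ℒ : ℝ}
    (hL : ∀ u x, |L u x| ≤ ℒ) {W : (𝕏 → ℝ) → ℝ} {C : ℝ} (hC : 0 ≤ C)
    (hW : L1LipschitzOnOrthant C W) :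
    L1LipschitzOnOrthant (ℒ + C) fun c =>
      ⨅ u, ((∑ x, c x * L u x) + ∑ o, W fun x' => ∑ x, c x * M u o x x') := by
  intro c c' hc hc'
  refine abs_ciInf_sub_ciInf_le fun u => ?_
  have hpush : ∀ c : 𝕏 → ℝ, (∀ x, 0 ≤ c x) → ∀ o x', 0 ≤ ∑ x, c x * M u o x x' :=
    fun c hc o x' => sum_nonneg fun x _ => mul_nonneg (hc x) (hMnn u o x x')
  have hcost := abs_sum_mul_sub_sum_mul_le (hL u) c c'
  have hfuture : |(∑ o, W fun x' => ∑ x, c x * M u o x x') -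
      ∑ o, W fun x' => ∑ x, c' x * M u o x x'| ≤ C * ∑ x, |c x - c' x| := by
    rw [← sum_sub_distrib]
    calc _ ≤ ∑ o, C * ∑ x', |∑ x, c x * M u o x x' - ∑ x, c' x * M u o x x'| :=
          (abs_sum_le_sum_abs _ _).trans <| sum_le_sum fun o _ =>
            hW _ _ (hpush c hc o) (hpush c' hc' o)
      _ ≤ C * ∑ x, |c x - c' x| := by
          rw [← mul_sum]
          exact mul_le_mul_of_nonneg_left
            (sum_sum_abs_sub_le_of_substochastic (hMnn u) (hMsub u) c c') hC
  rw [add_sub_add_comm, add_mul]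
  exact (abs_add_le _ _).trans (add_le_add hcost hfuture)

theorem statement14_general (𝕏 𝕌 𝕆 : Type)
    [Fintype 𝕏] [Nonempty 𝕏] [Fintype 𝕌] [Nonempty 𝕌] [Fintype 𝕆]
    (T : ℕ)
    (M : ℕ → 𝕌 → 𝕆 → 𝕏 → 𝕏 → ℝ)
    (hMnn : ∀ t u o x x', 0 ≤ M t u o x x')
    (hMsub : ∀ t u x, ∑ o, ∑ x', M t u o x x' = 1)
    (L : ℕ → 𝕌 → 𝕏 → ℝ) (ℒ : ℝ) (hL : ∀ t u x, |L t u x| ≤ ℒ)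
    (K : 𝕏 → ℝ) (𝒦 : ℝ) (hK : ∀ x, |K x| ≤ 𝒦)
    (V : ℕ → (𝕏 → ℝ) → ℝ)
    (hVT : ∀ c, V T c = ∑ x, c x * K x)
    (hVrec : ∀ t < T, ∀ c, V t c =
      ⨅ u, ((∑ x, c x * L t u x) +
        ∑ o, V (t + 1) fun x' => ∑ x, c x * M t u o x x')) :
    ∀ t ≤ T, ∀ c c' : 𝕏 → ℝ, (∀ x, 0 ≤ c x) → (∀ x, 0 ≤ c' x) →
      |V t c - V t c'| ≤ (ℒ * ((T - t : ℕ) : ℝ) + 𝒦) * ∑ x, |c x - c' x| := by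
  obtain ⟨x₀⟩ := ‹Nonempty 𝕏›
  obtain ⟨u₀⟩ := ‹Nonempty 𝕌›
  have hℒ : 0 ≤ ℒ := (abs_nonneg _).trans (hL 0 u₀ x₀)
  have h𝒦 : 0 ≤ 𝒦 := (abs_nonneg _).trans (hK x₀)
  suffices h : ∀ k t, t + k = T → L1LipschitzOnOrthant (ℒ * k + 𝒦) (V t) from
    fun t ht => h (T - t) t (by omega)
  intro k
  induction k with
  | zero =>
    intro t ht c c' _ _
    obtain rfl : t = T := by omega
    simpa [hVT] using abs_sum_mul_sub_sum_mul_le hK c c'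
  | succ k ih =>
    intro t ht
    have hV : V t = _ := funext (hVrec t (by omega))
    rw [hV, Nat.cast_succ, mul_add_one, add_right_comm, add_comm]
    exact (ih (t + 1) (by omega)).bellman_step (hMnn t) (fun u x => (hMsub t u x).le)
      (hL t) (by positivity)

/-- The functions `Ṽ t` of the homogeneous POMDP Bellman
recursion are `(ℒ(T − t) + 𝒦)`-Lipschitz for the `ℓ1` norm on the nonnegative
orthant, when the matrices `M_t^{u,o}` are nonnegative and sub-stochastic,
`‖L_t^u‖_∞ ≤ ℒ` and `‖K‖_∞ ≤ 𝒦`. -/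
theorem statement14 (𝕏 𝕌 𝕆 : Type)
    [Fintype 𝕏] [Nonempty 𝕏] [Fintype 𝕌] [Nonempty 𝕌] [Fintype 𝕆] [Nonempty 𝕆]
    (T : ℕ)
    (M : ℕ → 𝕌 → 𝕆 → 𝕏 → 𝕏 → ℝ)
    (hMnn : ∀ t u o x x', 0 ≤ M t u o x x')
    (hMsub : ∀ t u x, ∑ o, ∑ x', M t u o x x' = 1)
    (L : ℕ → 𝕌 → 𝕏 → ℝ) (ℒ : ℝ) (hL : ∀ t u x, |L t u x| ≤ ℒ)
    (K : 𝕏 → ℝ) (𝒦 : ℝ) (hK : ∀ x, |K x| ≤ 𝒦)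
    (V : ℕ → (𝕏 → ℝ) → ℝ)
    (hVT : ∀ c, V T c = ∑ x, c x * K x)
    (hVrec : ∀ t < T, ∀ c, V t c =
      ⨅ u, ((∑ x, c x * L t u x) +
        ∑ o, V (t + 1) fun x' => ∑ x, c x * M t u o x x')) :
    ∀ t ≤ T, ∀ c c' : 𝕏 → ℝ, (∀ x, 0 ≤ c x) → (∀ x, 0 ≤ c' x) →
      |V t c - V t c'| ≤ (ℒ * ((T - t : ℕ) : ℝ) + 𝒦) * ∑ x, |c x - c' x| :=
  statement14_general 𝕏 𝕌 𝕆 T M hMnn hMsub L ℒ hL K 𝒦 hK V hVT hVrec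
end
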